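/- arXiv:1202.4443 — 4 statements merged into one kernel-verified Lean document; each statement's English description precedes it below -/
import Mathlib

section
/- Let d, m be natural numbers with d < 2m. Then the function ω ↦ (1 + ‖ω‖²)^{−m} is integrable on ℝ^d, and the kernel K : ℝ^d × ℝ^d → ℂ defined by K(x,y) = ∫_{ℝ^d} (1 + ‖ω‖²)^{−m} exp(2πi (x−y)·ω) dω is Hermitian positive semidefinite: K(y,x) = conj(K(x,y)) for all x, y, and for every n ∈ ℕ, points x₁,…,xₙ ∈ ℝ^d and coefficients c₁,…,cₙ ∈ ℂ, the sum Σᵢⱼ cᵢ conj(cⱼ) K(xᵢ,xⱼ) is a nonnegative real number. -/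
open MeasureTheory

/-- For `d < 2m` the weight `ω ↦ (1+‖ω‖²)^{-m}` is integrable on `ℝ^d` and the Sobolev
kernel `K(x,y) = ∫ (1+‖ω‖²)^{-m} e^{2πi(x-y)·ω} dω` is Hermitian positive semidefinite. -/
theorem stmt_8 (d m : ℕ) (hdm : d < 2 * m)
    (K : EuclideanSpace ℝ (Fin d) → EuclideanSpace ℝ (Fin d) → ℂ)
    (hK : ∀ x y, K x y = ∫ ω : EuclideanSpace ℝ (Fin d),
        ((((1 + ‖ω‖ ^ 2) ^ m)⁻¹ : ℝ) : ℂ) *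
          Complex.exp (2 * (Real.pi : ℂ) * Complex.I * ((inner ℝ (x - y) ω : ℝ) : ℂ))) :
    Integrable (fun ω : EuclideanSpace ℝ (Fin d) => ((1 + ‖ω‖ ^ 2) ^ m)⁻¹) ∧
    (∀ x y, K y x = (starRingEnd ℂ) (K x y)) ∧
    (∀ (n : ℕ) (x : Fin n → EuclideanSpace ℝ (Fin d)) (c : Fin n → ℂ),
      0 ≤ (∑ i, ∑ j, c i * (starRingEnd ℂ) (c j) * K (x i) (x j)).re ∧
      (∑ i, ∑ j, c i * (starRingEnd ℂ) (c j) * K (x i) (x j)).im = 0) := by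
  set w : EuclideanSpace ℝ (Fin d) → ℝ := fun ω => ((1 + ‖ω‖ ^ 2) ^ m)⁻¹ with hw
  have hw_nonneg : ∀ ω, 0 ≤ w ω := fun ω => by positivity
  have hw_int : Integrable w := by
    have h := integrable_rpow_neg_one_add_norm_sq (E := EuclideanSpace ℝ (Fin d))
        (μ := volume) (r := 2 * m) (by simp; exact_mod_cast hdm)
    convert h using 2 with ω
    have h1 : (0:ℝ) < 1 + ‖ω‖ ^ 2 := by positivity
    rw [show (-(2 * (m:ℝ)) / 2) = -(m:ℝ) by ring, Real.rpow_neg h1.le, Real.rpow_natCast]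
  have hnorm : ∀ t : ℝ, ‖Complex.exp (2 * (Real.pi : ℂ) * Complex.I * (t : ℂ))‖ = 1 := by
    intro t
    rw [Complex.norm_exp]
    have : (2 * (Real.pi : ℂ) * Complex.I * (t : ℂ)).re = 0 := by
      simp [Complex.mul_re, Complex.mul_im]
    rw [this, Real.exp_zero]
  -- integrability of the complex integrand
  have hInt : ∀ x y : EuclideanSpace ℝ (Fin d), Integrable (fun ω : EuclideanSpace ℝ (Fin d) =>
      ((w ω : ℝ) : ℂ) * Complex.exp (2 * (Real.pi : ℂ) * Complex.I * ((inner ℝ (x - y) ω : ℝ) : ℂ))) := by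
    intro x y
    have hmeas : AEStronglyMeasurable (fun ω : EuclideanSpace ℝ (Fin d) =>
        Complex.exp (2 * (Real.pi : ℂ) * Complex.I * ((inner ℝ (x - y) ω : ℝ) : ℂ))) volume := by
      apply Continuous.aestronglyMeasurable
      apply Complex.continuous_exp.comp
      apply Continuous.mul continuous_const
      exact Complex.continuous_ofReal.comp (continuous_const.inner continuous_id)
    have h := Integrable.bdd_mul (c := 1) (hw_int.ofReal (𝕜 := ℂ)) hmeas
      (ae_of_all _ fun ω => le_of_eq (hnorm _))
    have heq : (fun ω : EuclideanSpace ℝ (Fin d) =>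
        ((w ω : ℝ) : ℂ) * Complex.exp (2 * (Real.pi : ℂ) * Complex.I * ((inner ℝ (x - y) ω : ℝ) : ℂ)))
        = fun ω => Complex.exp (2 * (Real.pi : ℂ) * Complex.I * ((inner ℝ (x - y) ω : ℝ) : ℂ)) * ((w ω : ℝ) : ℂ) := by
      funext ω; ring
    rw [heq]; exact h
  have hconj : ∀ t : ℝ, (starRingEnd ℂ) (Complex.exp (2 * (Real.pi : ℂ) * Complex.I * (t : ℂ)))
      = Complex.exp (2 * (Real.pi : ℂ) * Complex.I * ((-t : ℝ) : ℂ)) := by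
    intro t
    rw [← Complex.exp_conj]
    congr 1
    simp only [map_mul, Complex.conj_I, Complex.conj_ofReal, map_ofNat]
    push_cast
    ring
  refine ⟨hw_int, ?_, ?_⟩
  · -- Hermitian
    intro x y
    rw [hK, hK, ← integral_conj]
    congr 1; funext ω
    rw [map_mul, Complex.conj_ofReal, hconj]
    congr 2
    rw [show y - x = -(x - y) by abel, inner_neg_left]
  · intro n x c
    set e : Fin n → EuclideanSpace ℝ (Fin d) → ℂ := fun i ω =>
      Complex.exp (2 * (Real.pi : ℂ) * Complex.I * ((inner ℝ (x i) ω : ℝ) : ℂ)) with he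
    set F : EuclideanSpace ℝ (Fin d) → ℂ := fun ω => ∑ i, c i * e i ω with hF
    have key : ∀ i j ω, ((w ω : ℝ) : ℂ) *
        Complex.exp (2 * (Real.pi : ℂ) * Complex.I * ((inner ℝ (x i - x j) ω : ℝ) : ℂ))
        = (w ω : ℂ) * (e i ω * (starRingEnd ℂ) (e j ω)) := by
      intro i j ω
      congr 1
      rw [he]
      simp only []
      rw [hconj, ← Complex.exp_add]
      congr 1
      rw [inner_sub_left]
      push_cast
      ring
    have hS : (∑ i, ∑ j, c i * (starRingEnd ℂ) (c j) * K (x i) (x j))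
        = ((∫ ω, w ω * Complex.normSq (F ω)) : ℝ) := by
      have h1 : ∀ i j, c i * (starRingEnd ℂ) (c j) * K (x i) (x j)
          = ∫ ω, c i * (starRingEnd ℂ) (c j) * ((w ω : ℂ) *
              (e i ω * (starRingEnd ℂ) (e j ω))) := by
        intro i j
        rw [hK, ← integral_const_mul]
        congr 1; funext ω
        rw [← key i j ω]
      calc (∑ i, ∑ j, c i * (starRingEnd ℂ) (c j) * K (x i) (x j))
          = ∑ i, ∑ j, ∫ ω, c i * (starRingEnd ℂ) (c j) * ((w ω : ℂ) *
              (e i ω * (starRingEnd ℂ) (e j ω))) := by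
            exact Finset.sum_congr rfl fun i _ => Finset.sum_congr rfl fun j _ => h1 i j
        _ = ∫ ω, ∑ i, ∑ j, c i * (starRingEnd ℂ) (c j) * ((w ω : ℂ) *
              (e i ω * (starRingEnd ℂ) (e j ω))) := by
            rw [integral_finset_sum]
            · exact Finset.sum_congr rfl fun i _ => (integral_finset_sum _ fun j _ => by
                have := (hInt (x i) (x j)).const_mul (c i * (starRingEnd ℂ) (c j))
                simpa only [key i j] using this).symm
            · intro i _
              apply integrable_finset_sum
              intro j _
              have := (hInt (x i) (x j)).const_mul (c i * (starRingEnd ℂ) (c j))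
              simpa only [key i j] using this
        _ = ∫ ω, ((w ω * Complex.normSq (F ω) : ℝ) : ℂ) := by
            congr 1; funext ω
            have hme : F ω * (starRingEnd ℂ) (F ω) = (Complex.normSq (F ω) : ℂ) := Complex.mul_conj _
            rw [Complex.ofReal_mul, ← hme, hF]
            simp only []
            rw [map_sum, Finset.sum_mul_sum]
            rw [Finset.mul_sum]
            refine Finset.sum_congr rfl fun i _ => ?_
            rw [Finset.mul_sum]
            refine Finset.sum_congr rfl fun j _ => ?_
            rw [map_mul]
            ring
        _ = ((∫ ω, w ω * Complex.normSq (F ω)) : ℝ) := integral_ofReal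
    constructor
    · rw [hS, Complex.ofReal_re]
      exact integral_nonneg fun ω => mul_nonneg (hw_nonneg ω) (Complex.normSq_nonneg _)
    · rw [hS, Complex.ofReal_im]
end

section
/- (Kramer sampling.) Let (Ω, μ) be a measure space, X a set, and k : X × Ω → ℂ such that ω ↦ k(x,ω) is measurable and in L²(Ω,μ) for every x ∈ X. Suppose there is a sequence (yₙ)_{n∈ℕ} in X such that the family (k(yₙ,·))_{n∈ℕ} is a complete orthogonal system in L²(Ω,μ): the elements are nonzero, pairwise orthogonal, and their linear span is dense in L²(Ω,μ). Then for every a ∈ L²(Ω,μ), setting g(x) = ∫_Ω a(ω) k(x,ω) dμ(ω) and K(x,y) = ∫_Ω k(x,ω) conj(k(y,ω)) dμ(ω), one has for every x ∈ X the sampling equation g(x) = Σ_{n∈ℕ} g(yₙ) · K(x,yₙ) / K(yₙ,yₙ), the series converging in ℂ. -/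
open MeasureTheory

set_option maxHeartbeats 1000000

/-- Kramer sampling theorem: if `(k(yₙ,·))ₙ` is a complete orthogonal system in `L²(Ω,μ)`
(nonzero, pairwise orthogonal, dense span), then every `g = S a` with `a ∈ L²(Ω,μ)`
satisfies the sampling equation `g(x) = Σₙ g(yₙ) K(x,yₙ)/K(yₙ,yₙ)`. -/
theorem stmt_12 {Ω X : Type*} [MeasurableSpace Ω] (μ : Measure Ω)
    (k : X → Ω → ℂ) (hk : ∀ x, MemLp (k x) 2 μ)
    (y : ℕ → X)
    (hne : ∀ n, ¬ (k (y n) =ᵐ[μ] 0))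
    (horth : ∀ m n, m ≠ n → ∫ ω, k (y m) ω * (starRingEnd ℂ) (k (y n) ω) ∂μ = 0)
    (hdense : (Submodule.span ℂ
        (Set.range fun n => (hk (y n)).toLp (k (y n)))).topologicalClosure = ⊤)
    (K : X → X → ℂ)
    (hK : ∀ x x', K x x' = ∫ ω, k x ω * (starRingEnd ℂ) (k x' ω) ∂μ)
    (a : Lp ℂ 2 μ) (g : X → ℂ)
    (hg : ∀ x, g x = ∫ ω, a ω * k x ω ∂μ) (x : X) :
    HasSum (fun n => g (y n) * K x (y n) / K (y n) (y n)) (g x) := by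
  classical
  set f : X → Lp ℂ 2 μ := fun x => (hk x).toLp (k x) with hfdef
  have hKinner : ∀ u v, K u v = (inner ℂ (f v) (f u) : ℂ) := by
    intro u v
    rw [hK, MeasureTheory.L2.inner_def]
    refine integral_congr_ae ?_
    filter_upwards [(hk u).coeFn_toLp, (hk v).coeFn_toLp] with ω h1 h2
    simp [hfdef, h1, h2, RCLike.inner_apply, mul_comm]
  have ha' : MemLp (fun ω => (starRingEnd ℂ) (a ω)) 2 μ := by
    refine ⟨(continuous_star.comp_aestronglyMeasurable (Lp.memLp a).1 : _), ?_⟩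
    have : eLpNorm (fun ω => (starRingEnd ℂ) (a ω)) 2 μ = eLpNorm (⇑a) 2 μ :=
      eLpNorm_congr_norm_ae (Filter.Eventually.of_forall fun ω => by simp)
    rw [this]; exact (Lp.memLp a).2
  set a' : Lp ℂ 2 μ := ha'.toLp _ with ha'def
  have hga : ∀ u, g u = (inner ℂ a' (f u) : ℂ) := by
    intro u
    rw [hg, MeasureTheory.L2.inner_def]
    refine integral_congr_ae ?_
    filter_upwards [(hk u).coeFn_toLp, ha'.coeFn_toLp] with ω h1 h2
    simp [hfdef, h1, h2, RCLike.inner_apply, ha'def, mul_comm]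
  have hfne : ∀ n, f (y n) ≠ 0 := by
    intro n h
    apply hne n
    have := ((hk (y n)).toLp_eq_toLp_iff (MemLp.zero (p := 2) (μ := μ))).mp
      (by simpa [MemLp.toLp_zero] using h)
    exact this
  set c : ℕ → ℝ := fun n => ‖f (y n)‖ with hcdef
  have hcne : ∀ n, (c n : ℂ) ≠ 0 := fun n => by
    simpa [hcdef] using norm_ne_zero_iff.mpr (hfne n)
  set e : ℕ → Lp ℂ 2 μ := fun n => ((c n)⁻¹ : ℂ) • f (y n) with hedef
  have horth' : ∀ i j, i ≠ j → (inner ℂ (f (y i)) (f (y j)) : ℂ) = 0 := by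
    intro i j hij
    rw [← hKinner]
    rw [hK]
    exact horth j i (Ne.symm hij)
  have hKself : ∀ n, K (y n) (y n) = ((c n : ℂ))^2 := by
    intro n
    rw [hKinner]
    rw [inner_self_eq_norm_sq_to_K]
    norm_num [hcdef]
  have honb : Orthonormal ℂ e := by
    rw [orthonormal_iff_ite]
    intro i j
    simp only [hedef, inner_smul_left, inner_smul_right, map_inv₀, Complex.conj_ofReal]
    by_cases hij : i = j
    · subst hij
      rw [inner_self_eq_norm_sq_to_K]
      simp only [if_pos rfl, if_true]
      have hc : ((‖f (y i)‖ : ℝ) : ℂ) ≠ 0 := hcne i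
      field_simp
      simp only [hcdef]
      exact div_self (pow_ne_zero 2 hc)
    · rw [horth' i j hij, if_neg hij]
      ring
  have hspan : Submodule.span ℂ (Set.range e) =
      Submodule.span ℂ (Set.range fun n => f (y n)) := by
    apply le_antisymm
    · rw [Submodule.span_le]; rintro _ ⟨n, rfl⟩
      exact Submodule.smul_mem _ _ (Submodule.subset_span ⟨n, rfl⟩)
    · rw [Submodule.span_le]; rintro _ ⟨n, rfl⟩
      have : f (y n) = (c n : ℂ) • e n := by
        rw [hedef]; rw [smul_smul]
        rw [mul_inv_cancel₀ (hcne n), one_smul]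
      show f (y n) ∈ _
      rw [this]
      exact Submodule.smul_mem _ _ (Submodule.subset_span ⟨n, rfl⟩)
  have hsp : ⊤ ≤ (Submodule.span ℂ (Set.range e)).topologicalClosure := by
    rw [hspan]
    rw [hdense]
  let b : HilbertBasis ℕ ℂ (Lp ℂ 2 μ) := HilbertBasis.mk honb hsp
  have hb : ⇑b = e := HilbertBasis.coe_mk honb hsp
  have hsum := b.hasSum_inner_mul_inner a' (f x)
  rw [← hga x] at hsum
  refine hsum.congr_fun fun n => ?_
  rw [hb]
  simp only [hedef, inner_smul_left, inner_smul_right, map_inv₀, Complex.conj_ofReal]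
  rw [← hga (y n), ← hKinner x (y n), hKself n]
  rw [div_eq_mul_inv, sq, mul_inv]
  ring
end

section
/- (Representer theorem, existence of a minimiser of representer form.) Let H be a complex Hilbert space, N ∈ ℕ, k₁,…,k_N ∈ H, L : ℂᴺ → ℝ ∪ {∞} an arbitrary loss function, and λ : [0,∞) → ℝ a non-decreasing function; define J(f) = L(⟨f,k₁⟩,…,⟨f,k_N⟩) + λ(‖f‖). If f₀ ∈ H minimises J over H, then the orthogonal projection f₀' of f₀ onto the (finite-dimensional) span of {k₁,…,k_N} also minimises J; in particular J possesses a minimiser of the form f = Σᵢ₌₁ᴺ αᵢ kᵢ with α₁,…,α_N ∈ ℂ. -/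
open MeasureTheory

/-- Representer theorem, existence: if `f₀` minimises
`J(f) = L(⟨f,k₁⟩,…,⟨f,k_N⟩) + λ(‖f‖)` with `λ` non-decreasing on `[0,∞)`, then the
orthogonal projection `f₀'` of `f₀` onto `span{k₁,…,k_N}` (characterised by membership and
orthogonality of the residual) also minimises `J`; in particular `J` has a minimiser of the
form `Σᵢ αᵢ kᵢ`. -/
theorem stmt_13 {H : Type*} [NormedAddCommGroup H] [InnerProductSpace ℂ H] [CompleteSpace H]
    (N : ℕ) (k : Fin N → H)
    (L : (Fin N → ℂ) → WithTop ℝ)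
    (lam : ℝ → ℝ) (hlam : MonotoneOn lam (Set.Ici 0))
    (J : H → WithTop ℝ)
    (hJ : ∀ f, J f = L (fun i => inner (𝕜 := ℂ) f (k i)) + (lam ‖f‖ : ℝ))
    (f₀ : H) (hmin : ∀ g, J f₀ ≤ J g) :
    (∀ f' ∈ Submodule.span ℂ (Set.range k),
      (∀ i, inner (𝕜 := ℂ) (f₀ - f') (k i) = 0) → ∀ g, J f' ≤ J g) ∧
    (∃ α : Fin N → ℂ, ∀ g, J (∑ i, α i • k i) ≤ J g) := by
  have key : ∀ f' ∈ Submodule.span ℂ (Set.range k),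
      (∀ i, inner (𝕜 := ℂ) (f₀ - f') (k i) = 0) → ∀ g, J f' ≤ J g := by
    intro f' hf' horth g
    -- residual orthogonal to every element of the span
    have hres : ∀ u ∈ Submodule.span ℂ (Set.range k),
        inner (𝕜 := ℂ) (f₀ - f') u = 0 := by
      intro u hu
      induction hu using Submodule.span_induction with
      | mem x hx =>
        obtain ⟨i, rfl⟩ := hx
        exact horth i
      | zero => simp
      | add x y _ _ hx hy => rw [inner_add_right, hx, hy, add_zero]
      | smul c x _ hx => rw [inner_smul_right, hx, mul_zero]
    -- inner products agree
    have hinner : ∀ i, inner (𝕜 := ℂ) f' (k i) = inner (𝕜 := ℂ) f₀ (k i) := by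
      intro i
      have := horth i
      rw [inner_sub_left, sub_eq_zero] at this
      exact this.symm
    -- norm comparison
    have hperp : inner (𝕜 := ℂ) f' (f₀ - f') = 0 := by
      have h := hres f' hf'
      have := congrArg (starRingEnd ℂ) h
      rwa [inner_conj_symm, map_zero] at this
    have hnormsq : ‖f₀‖ ^ 2 = ‖f'‖ ^ 2 + ‖f₀ - f'‖ ^ 2 := by
      have h := norm_add_sq_eq_norm_sq_add_norm_sq_of_inner_eq_zero f' (f₀ - f') hperp
      rw [add_sub_cancel] at h
      simpa [pow_two] using h
    have hnorm : ‖f'‖ ≤ ‖f₀‖ := by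
      have h2 : ‖f'‖ ^ 2 ≤ ‖f₀‖ ^ 2 := by nlinarith [sq_nonneg ‖f₀ - f'‖]
      exact (pow_le_pow_iff_left₀ (norm_nonneg _) (norm_nonneg _) two_ne_zero).mp h2
    have hlamle : (lam ‖f'‖ : WithTop ℝ) ≤ (lam ‖f₀‖ : ℝ) := by
      exact_mod_cast hlam (norm_nonneg f') (norm_nonneg f₀) hnorm
    have hJle : J f' ≤ J f₀ := by
      rw [hJ f', hJ f₀]
      have hLe : L (fun i => inner (𝕜 := ℂ) f' (k i)) =
          L (fun i => inner (𝕜 := ℂ) f₀ (k i)) := by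
        congr 1; funext i; exact hinner i
      rw [hLe]
      exact add_le_add_right hlamle _
    exact hJle.trans (hmin g)
  refine ⟨key, ?_⟩
  -- existence via orthogonal projection
  set K := Submodule.span ℂ (Set.range k) with hK
  haveI : FiniteDimensional ℂ K := FiniteDimensional.span_of_finite ℂ (Set.finite_range k)
  haveI : Submodule.HasOrthogonalProjection K := by infer_instance
  set f' : H := (Submodule.orthogonalProjection K f₀ : H) with hf'def
  have hf'mem : f' ∈ K := (Submodule.orthogonalProjection K f₀).2
  have hresid : f₀ - f' ∈ Kᗮ := K.sub_starProjection_mem_orthogonal f₀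
  have horth : ∀ i, inner (𝕜 := ℂ) (f₀ - f') (k i) = 0 := by
    intro i
    have hk : k i ∈ K := Submodule.subset_span ⟨i, rfl⟩
    have h := hresid (k i) hk
    have := congrArg (starRingEnd ℂ) h
    rwa [inner_conj_symm, map_zero] at this
  obtain ⟨α, hα⟩ := (Submodule.mem_span_range_iff_exists_fun (R := ℂ)).mp hf'mem
  exact ⟨α, by rw [hα]; exact key f' hf'mem horth⟩
end

section
/- (Power-function bound for the image under an integral transform.) Let (Ω, μ) be a measure space, X a set, and k : X × Ω → ℂ with ω ↦ k(x,ω) in L²(Ω,μ) for every x ∈ X. Let 𝒢 be a complex Hilbert space, g : Ω → 𝒢, W ⊆ Ω, and P the orthogonal projection of 𝒢 onto the closure of the span of { g(ω) : ω ∈ W }. Fix a ∈ 𝒢 and suppose the error function e(ω) = ⟨a, g(ω)⟩ − ⟨P a, g(ω)⟩ is μ-measurable and the power function P_W(ω) = ‖g(ω) − P(g(ω))‖ belongs to L²(Ω,μ). Then for every x ∈ X the function ω ↦ e(ω) k(x,ω) is μ-integrable and |∫_Ω e(ω) k(x,ω) dμ(ω)| ≤ ‖a‖_𝒢 · ‖P_W‖_{L²(Ω,μ)}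 · ‖k(x,·)‖_{L²(Ω,μ)}. -/
open MeasureTheory
open scoped ENNReal NNReal

/-- Power-function bound for the image under an integral transform: with the interpolation
error `e(ω) = ⟨a, g(ω)⟩ - ⟨P a, g(ω)⟩` (so `S(a)(x) - S(a_W)(x) = ∫ e(ω) k(x,ω) dμ(ω)`)
and the power function `P_W(ω) = ‖g(ω) - P(g(ω))‖ ∈ L²(Ω,μ)`, the integrand
`ω ↦ e(ω) k(x,ω)` is integrable and
`|∫ e(ω) k(x,ω) dμ(ω)| ≤ ‖a‖ ‖P_W‖_{L²} ‖k(x,·)‖_{L²}`. -/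
theorem stmt_18 {Ω X : Type*} [MeasurableSpace Ω] (μ : Measure Ω)
    {𝒢 : Type*} [NormedAddCommGroup 𝒢] [InnerProductSpace ℂ 𝒢] [CompleteSpace 𝒢]
    (k : X → Ω → ℂ) (hk : ∀ x, MemLp (k x) 2 μ)
    (g : Ω → 𝒢) (W : Set Ω) (a : 𝒢)
    (e : Ω → ℂ)
    (he : ∀ ω, e ω = inner (𝕜 := ℂ) a (g ω) -
      inner (𝕜 := ℂ)
        ((Submodule.orthogonalProjection ((Submodule.span ℂ (g '' W)).topologicalClosure) a : 𝒢)) (g ω))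
    (hem : AEStronglyMeasurable e μ)
    (P_W : Ω → ℝ)
    (hPW : ∀ ω, P_W ω =
      ‖g ω - (Submodule.orthogonalProjection ((Submodule.span ℂ (g '' W)).topologicalClosure) (g ω) : 𝒢)‖)
    (hP2 : MemLp P_W 2 μ)
    (x : X) :
    Integrable (fun ω => e ω * k x ω) μ ∧
    ‖∫ ω, e ω * k x ω ∂μ‖ ≤
      ‖a‖ * (eLpNorm P_W 2 μ).toReal * (eLpNorm (k x) 2 μ).toReal := by
  set K := (Submodule.span ℂ (g '' W)).topologicalClosure
  -- pointwise bound on e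
  have hbound : ∀ ω, ‖e ω‖ ≤ ‖a‖ * P_W ω := by
    intro ω
    have h1 : (inner (𝕜 := ℂ) ((Submodule.orthogonalProjection K a : 𝒢)) (g ω)) =
        inner (𝕜 := ℂ) a ((Submodule.orthogonalProjection K (g ω) : 𝒢)) :=
      Submodule.inner_starProjection_left_eq_right K a (g ω)
    have : e ω = inner (𝕜 := ℂ) a (g ω - (Submodule.orthogonalProjection K (g ω) : 𝒢)) := by
      rw [he ω, h1, inner_sub_right]
    rw [this, hPW ω]
    exact norm_inner_le_norm a _
  -- e ∈ ℒ²
  have he2 : MemLp e 2 μ := by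
    refine MemLp.of_le (hP2.const_mul ‖a‖) hem ?_
    filter_upwards with ω
    refine (hbound ω).trans ?_
    rw [Real.norm_eq_abs]
    exact le_abs_self _
  -- Hölder
  have hol : eLpNorm (fun ω => e ω * k x ω) 1 μ ≤ eLpNorm e 2 μ * eLpNorm (k x) 2 μ := by
    have := eLpNorm_le_eLpNorm_mul_eLpNorm'_of_norm (p := 2) (q := 2) (r := 1) hem
      (hk x).aestronglyMeasurable (· * ·) 1 (Filter.Eventually.of_forall fun ω => by simp [norm_mul])
    simpa using this
  have hint : Integrable (fun ω => e ω * k x ω) μ := by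
    rw [← memLp_one_iff_integrable]
    exact ⟨hem.mul (hk x).aestronglyMeasurable,
      lt_of_le_of_lt hol (ENNReal.mul_lt_top he2.eLpNorm_lt_top (hk x).eLpNorm_lt_top)⟩
  refine ⟨hint, ?_⟩
  -- bound on eLpNorm e
  have he_le : eLpNorm e 2 μ ≤ (‖a‖₊ : ℝ≥0∞) * eLpNorm P_W 2 μ := by
    calc eLpNorm e 2 μ ≤ eLpNorm (fun ω => ‖a‖ * P_W ω) 2 μ := by
          refine eLpNorm_mono fun ω => ?_
          refine (hbound ω).trans ?_
          rw [Real.norm_eq_abs]; exact le_abs_self _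
      _ = (‖a‖₊ : ℝ≥0∞) * eLpNorm P_W 2 μ := by
          have : (fun ω => ‖a‖ * P_W ω) = (‖a‖ : ℝ) • P_W := by ext ω; simp [smul_eq_mul]
          rw [this, eLpNorm_const_smul]
          simp
          rfl
  have h1 : ‖∫ ω, e ω * k x ω ∂μ‖ ≤ (eLpNorm (fun ω => e ω * k x ω) 1 μ).toReal := by
    rw [eLpNorm_one_eq_lintegral_enorm]
    calc ‖∫ ω, e ω * k x ω ∂μ‖ ≤ ∫ ω, ‖e ω * k x ω‖ ∂μ := norm_integral_le_integral_norm _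
      _ = (∫⁻ ω, ‖e ω * k x ω‖₊ ∂μ).toReal := by
          rw [integral_norm_eq_lintegral_enorm (f := fun ω => e ω * k x ω) (hem.mul (hk x).aestronglyMeasurable)]
          rfl
  refine h1.trans ?_
  have hfin : (‖a‖₊ : ℝ≥0∞) * eLpNorm P_W 2 μ * eLpNorm (k x) 2 μ ≠ ⊤ :=
    (ENNReal.mul_lt_top (ENNReal.mul_lt_top ENNReal.coe_lt_top hP2.eLpNorm_lt_top)
      (hk x).eLpNorm_lt_top).ne
  have := ENNReal.toReal_mono hfin
    (hol.trans (mul_le_mul_left he_le _))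
  refine this.trans_eq ?_
  rw [ENNReal.toReal_mul, ENNReal.toReal_mul]
  simp [mul_assoc]
end
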